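/- Let s be a network state and T ⊆ F a set of fix-actions satisfying the following enabling-closure condition: for every f ∈ T that is not applicable to s, there exists a literal ℓ ∈ pre(f) not satisfied by s such that every f' ∈ F with ℓ ∈ post(f') belongs to T. Let σ = f₁, …, f_n be a sequence over F applicable to s, and let k be an index such that f_k ∈ T and f_j ∉ T for all j < k. Then f_k is applicable to s. -/

import Mathlib

/-- A fix-action over network propositions `P`: precondition and postcondition
are finite sets of literals (a literal is a pair of a proposition and a
polarity, `true` for a positive and `false` for a negative occurrence),
containing at most one literal per proposition, together with a strictly
positive real cost. -/
structure FixAction (P : Type*) where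
  pre : Finset (P × Bool)
  post : Finset (P × Bool)
  cost : ℝ
  cost_pos : 0 < cost
  pre_unique : ∀ (p : P) (b b' : Bool), (p, b) ∈ pre → (p, b') ∈ pre → b = b'
  post_unique : ∀ (p : P) (b b' : Bool), (p, b) ∈ post → (p, b') ∈ post → b = b'

variable {P : Type*} [DecidableEq P]

/-- A network state `s` satisfies a literal `(p, true)` iff `p ∈ s`,
and satisfies `(p, false)` iff `p ∉ s`. -/
def satLit (s : Finset P) (l : P × Bool) : Prop :=
  (l.1 ∈ s) ↔ l.2 = true

/-- A fix-action is applicable to a state if the state satisfies every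
literal of its precondition. -/
def FixAction.applicable (f : FixAction P) (s : Finset P) : Prop :=
  ∀ l ∈ f.pre, satLit s l

/-- The result `s[f]` of applying a fix-action: every proposition occurring
positively in `post f`, together with every proposition of `s` whose
negation does not occur in `post f`. -/
def FixAction.applyTo (f : FixAction P) (s : Finset P) : Finset P :=
  (f.post.filter (fun l => l.2 = true)).image Prod.fst ∪
    s.filter (fun p => (p, false) ∉ f.post)

/-- Applicability of a finite sequence of fix-actions to a state. -/
def seqApplicable (s : Finset P) : List (FixAction P) → Prop
  | [] => True
  | f :: σ => f.applicable s ∧ seqApplicable (f.applyTo s) σ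

/-- The result `s[σ]` of applying a sequence of fix-actions. -/
def seqApply (s : Finset P) : List (FixAction P) → Finset P
  | [] => s
  | f :: σ => seqApply (f.applyTo s) σ

/-- The cost of a sequence of fix-actions: the sum of the costs of its
elements. -/
noncomputable def seqCost (σ : List (FixAction P)) : ℝ :=
  (σ.map FixAction.cost).sum

/-! A literal that fails in `s` keeps failing along a sequence until some action achieves it.
Were the first action of `T` not applicable to `s`, the closure condition would give a failing
precondition literal whose achievers all lie in `T`; no action before it achieves that literal,
so it still fails in the state where the sequence applies that action. -/

namespace FixAction

theorem mem_applyTo {f : FixAction P} {s : Finset P} {p : P} :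
    p ∈ f.applyTo s ↔ (p, true) ∈ f.post ∨ (p ∈ s ∧ (p, false) ∉ f.post) := by
  simp [applyTo]

theorem not_satLit_applyTo {f : FixAction P} {s : Finset P} {l : P × Bool}
    (hs : ¬ satLit s l) (hpost : l ∉ f.post) : ¬ satLit (f.applyTo s) l := by
  obtain ⟨p, _ | _⟩ := l <;> simp_all [satLit, mem_applyTo]

end FixAction

theorem not_satLit_seqApply {l : P × Bool} :
    ∀ {σ : List (FixAction P)} {s : Finset P}, ¬ satLit s l → (∀ f ∈ σ, l ∉ f.post) →
      ¬ satLit (seqApply s σ) l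
  | [], _, hs, _ => hs
  | f :: σ, _, hs, hpost =>
    not_satLit_seqApply (σ := σ)
      (FixAction.not_satLit_applyTo hs (hpost f List.mem_cons_self))
      fun f' hf' => hpost f' (List.mem_cons_of_mem f hf')

theorem seqApplicable.applicable_get :
    ∀ {σ : List (FixAction P)} {s : Finset P}, seqApplicable s σ →
      ∀ k : Fin σ.length, (σ.get k).applicable (seqApply s (σ.take k))
  | _ :: _, _, happ, ⟨0, _⟩ => happ.1
  | _ :: _, _, happ, ⟨k + 1, hk⟩ => happ.2.applicable_get ⟨k, Nat.lt_of_succ_lt_succ hk⟩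

theorem first_stubborn_action_applicable_general
    {P : Type*} [DecidableEq P]
    (F : Finset (FixAction P)) (s : Finset P) (T : Set (FixAction P))
    (hT : ∀ f ∈ T, ¬ f.applicable s →
      ∃ l ∈ f.pre, ¬ satLit s l ∧ ∀ f' ∈ F, l ∈ f'.post → f' ∈ T)
    (σ : List (FixAction P)) (hσF : ∀ f ∈ σ, f ∈ F)
    (happ : seqApplicable s σ)
    (k : Fin σ.length) (hk : σ.get k ∈ T)
    (hkmin : ∀ j : Fin σ.length, j < k → σ.get j ∉ T) :
    (σ.get k).applicable s := by
  by_contra hna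
  obtain ⟨l, hl, hls, hachievers⟩ := hT _ hk hna
  have hprefix : ∀ f ∈ σ.take k, l ∉ f.post := by
    intro f hf hlf
    obtain ⟨j, hj, rfl⟩ := List.mem_take_iff_getElem.mp hf
    have hjk : j < k := hj.trans_le (min_le_left _ _)
    exact hkmin ⟨j, by omega⟩ hjk
      (hachievers _ (hσF _ (List.getElem_mem _)) hlf)
  exact not_satLit_seqApply hls hprefix (happ.applicable_get k l hl)

/-- Enabling-closure: if `T ⊆ F` is such that every `f ∈ T` not applicable to
`s` has some unsatisfied precondition literal all of whose achievers in `F`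
belong to `T`, then in any sequence over `F` applicable to `s`, the first
action belonging to `T` is applicable to `s`. -/
theorem first_stubborn_action_applicable
    {P : Type*} [DecidableEq P]
    (F : Finset (FixAction P)) (s : Finset P) (T : Set (FixAction P))
    (hTF : ∀ f ∈ T, f ∈ F)
    (hT : ∀ f ∈ T, ¬ f.applicable s →
      ∃ l ∈ f.pre, ¬ satLit s l ∧ ∀ f' ∈ F, l ∈ f'.post → f' ∈ T)
    (σ : List (FixAction P)) (hσF : ∀ f ∈ σ, f ∈ F)
    (happ : seqApplicable s σ)
    (k : Fin σ.length) (hk : σ.get k ∈ T)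
    (hkmin : ∀ j : Fin σ.length, j < k → σ.get j ∉ T) :
    (σ.get k).applicable s :=
  first_stubborn_action_applicable_general F s T hT σ hσF happ k hk hkmin
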